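/- Let H be a fixed graph with at least one edge. Then n^{-1/m_0(H)} is a threshold for the property of containing a copy of H: if p·n^{1/m_0(H)} → 0 then a.a.s. G(n,p) contains no copy of H, while if p·n^{1/m_0(H)} → ∞ then a.a.s. G(n,p) contains a copy of H. -/

import Mathlib

open MeasureTheory Filter Topology

/-- Bernoulli measure on `Bool` with success probability `p` (clamped to `[0,1]`). -/
noncomputable def bernoulliMeasure (p : ℝ) : Measure Bool :=
  (min (ENNReal.ofReal p) 1) • Measure.dirac true +
    (1 - min (ENNReal.ofReal p) 1) • Measure.dirac false

/-- The distribution of the binomial random graph `G(n,p)`, as a product of independent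
Bernoulli measures, one for each potential edge. -/
noncomputable def gnp (n : ℕ) (p : ℝ) : Measure (Sym2 (Fin n) → Bool) :=
  Measure.pi fun _ => bernoulliMeasure p

/-- The simple graph on `[n]` determined by an outcome of the edge indicators. -/
def graphOf {n : ℕ} (ω : Sym2 (Fin n) → Bool) : SimpleGraph (Fin n) :=
  SimpleGraph.fromRel fun u v => ω s(u, v) = true

/-- `G` contains a (not necessarily induced) copy of `H`. -/
def ContainsCopy {α β : Type*} (H : SimpleGraph α) (G : SimpleGraph β) : Prop :=
  ∃ f : α → β, Function.Injective f ∧ ∀ ⦃u v⦄, H.Adj u v → G.Adj (f u) (f v)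

/-- The maximum degree of a graph on a finite vertex type. -/
noncomputable def maxDeg {V : Type*} [Fintype V] (G : SimpleGraph V) : ℕ :=
  Finset.univ.sup fun v => (G.neighborSet v).ncard

/-- The maximum 0-density `m₀(H)`. -/
noncomputable def m0 {V : Type*} [Fintype V] (H : SimpleGraph V) : ℝ :=
  sSup {x : ℝ | ∃ H' : H.Subgraph, H'.verts.Nonempty ∧
    x = (H'.edgeSet.ncard : ℝ) / (H'.verts.ncard : ℝ)}

/-- The maximum 1-density `m₁(H)`. -/
noncomputable def m1 {V : Type*} [Fintype V] (H : SimpleGraph V) : ℝ :=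
  sSup {x : ℝ | ∃ H' : H.Subgraph, 1 < H'.verts.ncard ∧
    x = (H'.edgeSet.ncard : ℝ) / ((H'.verts.ncard : ℝ) - 1)}

/-- The maximum 2-density `m₂(H)`. -/
noncomputable def m2 {V : Type*} [Fintype V] (H : SimpleGraph V) : ℝ :=
  sSup {x : ℝ | ∃ H' : H.Subgraph, 0 < H'.edgeSet.ncard ∧
    x = if 2 < H'.verts.ncard
      then ((H'.edgeSet.ncard : ℝ) - 1) / ((H'.verts.ncard : ℝ) - 2)
      else 1 / 2}

/-- The maximum Riordan-density `m_R(H)`. -/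
noncomputable def mR {V : Type*} [Fintype V] (H : SimpleGraph V) : ℝ :=
  sSup {x : ℝ | ∃ H' : H.Subgraph, 2 < H'.verts.ncard ∧
    x = (H'.edgeSet.ncard : ℝ) / ((H'.verts.ncard : ℝ) - 2)}

/-- The local 1-density `m₁(x,H)` of `H` at the vertex `x`. -/
noncomputable def m1At {V : Type*} [Fintype V] (H : SimpleGraph V) (x : V) : ℝ :=
  sSup {r : ℝ | ∃ H' : H.Subgraph, x ∈ H'.verts ∧ 1 < H'.verts.ncard ∧
    r = (H'.edgeSet.ncard : ℝ) / ((H'.verts.ncard : ℝ) - 1)}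

/-- `H` is strictly 1-balanced: `H` itself is the unique maximiser of the 1-density. -/
def StrictlyOneBalanced {V : Type*} [Fintype V] (H : SimpleGraph V) : Prop :=
  ∀ H' : H.Subgraph, 1 < H'.verts.ncard → H' ≠ ⊤ →
    (H'.edgeSet.ncard : ℝ) / ((H'.verts.ncard : ℝ) - 1) <
      (H.edgeSet.ncard : ℝ) / ((Fintype.card V : ℝ) - 1)

/-- `H` is vertex-1-balanced: the local 1-density at every vertex equals `m₁(H)`. -/
def VertexOneBalanced {V : Type*} [Fintype V] (H : SimpleGraph V) : Prop :=
  ∀ x : V, m1At H x = m1 H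

/-- `G` (an `n`-vertex graph) contains an `H`-factor: `⌊n / v(H)⌋` pairwise vertex-disjoint
copies of `H`. -/
def HasFactor {V : Type*} [Fintype V] (H : SimpleGraph V) {n : ℕ}
    (G : SimpleGraph (Fin n)) : Prop :=
  ∃ f : Fin (n / Fintype.card V) × V → Fin n, Function.Injective f ∧
    ∀ (i : Fin (n / Fintype.card V)) ⦃u v : V⦄, H.Adj u v → G.Adj (f (i, u)) (f (i, v))

/-!
If `H₀ ⊆ H` attains the maximum density `m₀(H) = e₀/v₀`, a union bound over the at most `n^{v₀}`
placements of `H₀` bounds the probability of a copy of `H` by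
`n^{v₀} p^{e₀} = (p n^{1/m₀(H)})^{e₀}`.

Conversely, let `X` count the embeddings of `H = (V, E)` into `G(n,p)`, `v = |V|`, and let `N` be
the number of embeddings `V ↪ [n]`, so `N ≥ (n/2)^v` once `n ≥ 2v`. Two embeddings `f, g` with
`B = f⁻¹(g(V))` share at most `e(H[B]) ≤ m₀(H) |B|` edges, and there are at most
`N v^{|B|} n^{v-|B|}` such pairs for a given `B`. Summing over `B ≠ ∅` gives
`Var X ≤ C (E X)² / (n p^{m₀(H)})`, and Chebyshev's inequality gives
`P(X = 0) ≤ C / (n p^{m₀(H)}) → 0`.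
-/

lemma Nat.pow_le_two_pow_mul_descFactorial {n k : ℕ} (h : 2 * k ≤ n) :
    n ^ k ≤ 2 ^ k * n.descFactorial k :=
  calc n ^ k ≤ (2 * (n + 1 - k)) ^ k := Nat.pow_le_pow_left (by omega) k
    _ ≤ 2 ^ k * n.descFactorial k := by
      rw [mul_pow]; exact Nat.mul_le_mul_left _ (Nat.pow_sub_le_descFactorial n k)

lemma pow_sub_mul_inv_pow_sub_one_le {a x : ℝ} (hx : 0 < x) (hax : 1 ≤ a * x) {k v : ℕ}
    (hkv : k ≤ v) : a ^ (v - k) * ((x ^ k)⁻¹ - 1) ≤ a ^ v / (a * x) := by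
  have ha : 0 < a := pos_of_mul_pos_left (one_pos.trans_le hax) hx.le
  rcases Nat.eq_zero_or_pos k with rfl | hk
  · simp only [pow_zero, inv_one, sub_self, mul_zero]; positivity
  calc a ^ (v - k) * ((x ^ k)⁻¹ - 1) ≤ a ^ (v - k) * (x ^ k)⁻¹ := by
        gcongr; linarith
    _ = a ^ v / (a * x) ^ k := by
        rw [mul_pow, ← div_eq_mul_inv, ← div_div, div_eq_mul_inv (a ^ v), ← pow_sub₀ _ ha.ne' hkv]
    _ ≤ a ^ v / (a * x) := by
        gcongr
        exact le_self_pow₀ hax hk.ne'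

lemma measure_nonpos_le_variance_div_sq {Ω : Type*} [MeasurableSpace Ω] {μ : Measure Ω}
    [IsFiniteMeasure μ] {X : Ω → ℝ} (hX : MemLp X 2 μ) (hμX : 0 < ∫ ω, X ω ∂μ) :
    μ {ω | X ω ≤ 0} ≤
      ENNReal.ofReal (ProbabilityTheory.variance X μ / (∫ ω, X ω ∂μ) ^ 2) := by
  refine (measure_mono fun ω (hω : X ω ≤ 0) => ?_).trans
    (ProbabilityTheory.meas_ge_le_variance_div_sq hX hμX)
  change _ ≤ |X ω - _|
  rw [abs_sub_comm]
  exact le_abs.2 (Or.inl (by linarith))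

section RandomGraph

open Finset

variable {n : ℕ} {p : ℝ}

instance (p : ℝ) : IsProbabilityMeasure (bernoulliMeasure p) :=
  ⟨by simp [bernoulliMeasure]⟩

instance (n : ℕ) (p : ℝ) : IsProbabilityMeasure (gnp n p) := by
  unfold gnp; infer_instance

lemma bernoulliMeasure_true (hp : p ≤ 1) : bernoulliMeasure p {true} = ENNReal.ofReal p := by
  simp [bernoulliMeasure, ENNReal.ofReal_le_one.mpr hp]

def allEdgesPresent (T : Finset (Sym2 (Fin n))) : Set (Sym2 (Fin n) → Bool) :=
  {ω | ∀ s ∈ T, ω s = true}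

lemma allEdgesPresent_union (S T : Finset (Sym2 (Fin n))) :
    allEdgesPresent (S ∪ T) = allEdgesPresent S ∩ allEdgesPresent T := by
  ext ω; simp [allEdgesPresent, or_imp, forall_and]

lemma gnp_allEdgesPresent (hp : p ≤ 1) (T : Finset (Sym2 (Fin n))) :
    gnp n p (allEdgesPresent T) = ENNReal.ofReal p ^ #T := by
  have : allEdgesPresent T = (T : Set (Sym2 (Fin n))).pi fun _ => {true} := by
    ext ω; simp [allEdgesPresent]
  rw [this, gnp, Measure.pi_pi_finset]
  simp [bernoulliMeasure_true hp]

lemma gnp_real_allEdgesPresent (hp₀ : 0 ≤ p) (hp₁ : p ≤ 1) (T : Finset (Sym2 (Fin n))) :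
    (gnp n p).real (allEdgesPresent T) = p ^ #T := by
  rw [measureReal_def, gnp_allEdgesPresent hp₁, ENNReal.toReal_pow, ENNReal.toReal_ofReal hp₀]

end RandomGraph

section Density

open Finset

variable {V : Type*} [Fintype V] (H : SimpleGraph V)

lemma m0_set_finite : {x : ℝ | ∃ H' : H.Subgraph, H'.verts.Nonempty ∧
    x = (H'.edgeSet.ncard : ℝ) / (H'.verts.ncard : ℝ)}.Finite :=
  (Set.finite_range fun H' : H.Subgraph => (H'.edgeSet.ncard : ℝ) / H'.verts.ncard).subset
    fun _ ⟨H', _, hx⟩ => ⟨H', hx.symm⟩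

lemma density_le_m0 {H' : H.Subgraph} (hH' : H'.verts.Nonempty) :
    (H'.edgeSet.ncard : ℝ) ≤ m0 H * H'.verts.ncard := by
  have hpos : (0 : ℝ) < H'.verts.ncard := by exact_mod_cast (Set.ncard_pos H'.verts.toFinite).2 hH'
  rw [← div_le_iff₀ hpos]
  exact le_csSup (m0_set_finite H).bddAbove ⟨H', hH', rfl⟩

lemma exists_subgraph_density_eq_m0 [Nonempty V] :
    ∃ H' : H.Subgraph, H'.verts.Nonempty ∧ (H'.edgeSet.ncard : ℝ) / H'.verts.ncard = m0 H := by
  obtain ⟨H', hH', hx⟩ := Set.Nonempty.csSup_mem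
    (by exact ⟨_, ⊤, Set.univ_nonempty, rfl⟩) (m0_set_finite H)
  exact ⟨H', hH', hx.symm⟩

lemma m0_nonneg : 0 ≤ m0 H :=
  Real.sSup_nonneg fun _ ⟨_, _, hx⟩ => hx ▸ by positivity

lemma m0_pos (hH : H.edgeSet.Nonempty) : 0 < m0 H := by
  obtain ⟨e, he⟩ := hH
  have hV : (⊤ : H.Subgraph).verts.Nonempty := ⟨e.out.1, trivial⟩
  have hE : (0 : ℝ) < (⊤ : H.Subgraph).edgeSet.ncard := by
    exact_mod_cast (Set.ncard_pos (Set.toFinite _)).2 ⟨e, by simpa using he⟩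
  have hv : (0 : ℝ) < (⊤ : H.Subgraph).verts.ncard := by
    exact_mod_cast (Set.ncard_pos (Set.toFinite _)).2 hV
  exact (div_pos hE hv).trans_le (le_csSup (m0_set_finite H).bddAbove ⟨⊤, hV, rfl⟩)

variable [DecidableEq V] [DecidableRel H.Adj]

lemma card_edges_within_le (B : Finset V) :
    (#(H.edgeFinset.filter fun e => ∀ x ∈ e, x ∈ B) : ℝ) ≤ m0 H * #B := by
  rcases B.eq_empty_or_nonempty with rfl | hB
  · rw [filter_false_of_mem fun e _ h => by simpa using h _ (Sym2.out_fst_mem e)]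
    simp
  set H' := (⊤ : H.Subgraph).induce B
  have hsub : ↑(H.edgeFinset.filter fun e => ∀ x ∈ e, x ∈ B) ⊆ H'.edgeSet := by
    intro e
    induction e with
    | _ u v => simp +contextual [H']
  have hcard := Set.ncard_le_ncard hsub (Set.toFinite _)
  rw [Set.ncard_coe_finset] at hcard
  have hverts : H'.verts.ncard = #B := Set.ncard_coe_finset B
  calc (#(H.edgeFinset.filter fun e => ∀ x ∈ e, x ∈ B) : ℝ) ≤ H'.edgeSet.ncard := by
        exact_mod_cast hcard
    _ ≤ m0 H * #B := by
        simpa [hverts] using density_le_m0 H (H' := H') (by simpa [H'] using hB)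

end Density

section Copies

open Finset

variable {W : Type*} (K : SimpleGraph W) {n : ℕ} {p : ℝ}

def copyEdges [Fintype K.edgeSet] (f : W ↪ Fin n) : Finset (Sym2 (Fin n)) :=
  K.edgeFinset.map f.sym2Map

lemma containsCopy_graphOf_iff [Fintype K.edgeSet] (ω : Sym2 (Fin n) → Bool) :
    ContainsCopy K (graphOf ω) ↔ ∃ f : W ↪ Fin n, ω ∈ allEdgesPresent (copyEdges K f) := by
  constructor
  · rintro ⟨f, hf, hadj⟩
    refine ⟨⟨f, hf⟩, fun s hs => ?_⟩
    obtain ⟨e, he, rfl⟩ := mem_map.1 hs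
    induction e with
    | _ u v =>
      have h : ω s(f u, f v) = true ∨ ω s(f v, f u) = true := (hadj (by simpa using he)).2
      rw [Sym2.eq_swap (a := f v), or_self] at h
      simpa using h
  · rintro ⟨f, hf⟩
    refine ⟨f, f.injective, fun u v huv => ?_⟩
    simp only [graphOf, SimpleGraph.fromRel_adj]
    refine ⟨f.injective.ne huv.ne, Or.inl ?_⟩
    simpa using hf _ (mem_map_of_mem _ (SimpleGraph.mem_edgeFinset.2 ((K.mem_edgeSet).2 huv)))

lemma gnp_containsCopy_le [Fintype W] [Fintype K.edgeSet] (hp : p ≤ 1) :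
    gnp n p {ω | ContainsCopy K (graphOf ω)} ≤
      n ^ Fintype.card W * ENNReal.ofReal p ^ #K.edgeFinset := by
  have hunion : {ω | ContainsCopy K (graphOf ω)} =
      ⋃ f : W ↪ Fin n, allEdgesPresent (copyEdges K f) := by
    ext ω; simp [containsCopy_graphOf_iff]
  calc gnp n p {ω | ContainsCopy K (graphOf ω)}
      ≤ ∑ f : W ↪ Fin n, gnp n p (allEdgesPresent (copyEdges K f)) :=
        hunion ▸ measure_iUnion_fintype_le _ _
    _ = Fintype.card (W ↪ Fin n) * ENNReal.ofReal p ^ #K.edgeFinset := by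
        simp [gnp_allEdgesPresent hp, copyEdges]
    _ ≤ n ^ Fintype.card W * ENNReal.ofReal p ^ #K.edgeFinset := by
        gcongr
        rw [Fintype.card_embedding_eq, Fintype.card_fin]
        exact_mod_cast Nat.descFactorial_le_pow n _

lemma ContainsCopy.subgraph {V β : Type*} {H : SimpleGraph V} {G : SimpleGraph β}
    (H' : H.Subgraph) :
    ContainsCopy H G → ContainsCopy H'.coe G
  | ⟨f, hf, hadj⟩ => ⟨f ∘ (↑), hf.comp Subtype.val_injective, fun _ _ h => hadj (H'.adj_sub h)⟩

lemma gnp_containsCopy_le_of_subgraph {V : Type*} [Fintype V] {H : SimpleGraph V} (hp : p ≤ 1)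
    (H' : H.Subgraph) :
    gnp n p {ω | ContainsCopy H (graphOf ω)} ≤
      n ^ H'.verts.ncard * ENNReal.ofReal p ^ H'.edgeSet.ncard := by
  classical
  have hverts : Fintype.card H'.verts = H'.verts.ncard := by
    rw [← Nat.card_eq_fintype_card, Nat.card_coe_set_eq]
  have hedges : H'.coe.edgeFinset.card = H'.edgeSet.ncard := by
    rw [← H'.image_coe_edgeSet_coe,
      Set.ncard_image_of_injective _ (Sym2.map.injective Subtype.val_injective),
      Set.ncard_eq_toFinset_card', SimpleGraph.edgeFinset]
  calc gnp n p {ω | ContainsCopy H (graphOf ω)}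
      ≤ gnp n p {ω | ContainsCopy H'.coe (graphOf ω)} :=
        measure_mono fun _ => ContainsCopy.subgraph H'
    _ ≤ _ := by simpa [hverts, hedges] using gnp_containsCopy_le H'.coe hp

end Copies

section ZeroStatement

variable {V : Type*} [Fintype V] {H : SimpleGraph V} {p : ℕ → ℝ}

theorem tendsto_gnp_containsCopy_zero (hH : H.edgeSet.Nonempty) (hp : ∀ n, 0 ≤ p n ∧ p n ≤ 1)
    (h : Tendsto (fun n : ℕ => p n * (n : ℝ) ^ (1 / m0 H)) atTop (𝓝 0)) :
    Tendsto (fun n : ℕ => gnp n (p n) {ω | ContainsCopy H (graphOf ω)}) atTop (𝓝 0) := by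
  have : Nonempty V := ⟨hH.some.out.1⟩
  obtain ⟨H₀, hne, hdens⟩ := exists_subgraph_density_eq_m0 H
  set v₀ := H₀.verts.ncard
  set e₀ := H₀.edgeSet.ncard
  have he₀ : e₀ ≠ 0 := by
    rintro h0
    have := m0_pos H hH
    simp [← hdens, e₀, h0] at this
  have hbound : ∀ n : ℕ, gnp n (p n) {ω | ContainsCopy H (graphOf ω)} ≤
      ENNReal.ofReal ((p n * (n : ℝ) ^ (1 / m0 H)) ^ e₀) := by
    intro n
    have hpow : ((n : ℝ) ^ (1 / m0 H)) ^ e₀ = (n : ℝ) ^ v₀ := by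
      rw [← hdens, one_div_div, ← Real.rpow_natCast, ← Real.rpow_mul (Nat.cast_nonneg n),
        div_mul_cancel₀ _ (Nat.cast_ne_zero.2 he₀), Real.rpow_natCast]
    refine (gnp_containsCopy_le_of_subgraph (hp n).2 H₀).trans_eq ?_
    rw [mul_pow, hpow, ENNReal.ofReal_mul (pow_nonneg (hp n).1 _), ENNReal.ofReal_pow (hp n).1,
      ← ENNReal.ofReal_natCast, ENNReal.ofReal_pow (Nat.cast_nonneg n), mul_comm]
  have hlim := ENNReal.tendsto_ofReal (h.pow e₀)
  rw [zero_pow he₀, ENNReal.ofReal_zero] at hlim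
  exact tendsto_of_tendsto_of_tendsto_of_le_of_le tendsto_const_nhds hlim (fun _ => zero_le) hbound

end ZeroStatement

section SecondMoment

open Finset

variable {V : Type*} [Fintype V] (H : SimpleGraph V) [DecidableRel H.Adj]
  {n : ℕ} {p : ℝ}

noncomputable def copyCount (ω : Sym2 (Fin n) → Bool) : ℝ :=
  ∑ f : V ↪ Fin n, (allEdgesPresent (copyEdges H f)).indicator 1 ω

lemma card_copyEdges (f : V ↪ Fin n) : #(copyEdges H f) = #H.edgeFinset := card_map _

lemma integral_copyCount (hp₀ : 0 ≤ p) (hp₁ : p ≤ 1) :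
    ∫ ω, copyCount H ω ∂gnp n p = Fintype.card (V ↪ Fin n) * p ^ #H.edgeFinset := by
  simp_rw [copyCount]
  rw [integral_finsetSum _ fun _ _ => .of_finite]
  simp [integral_indicator_one MeasurableSet.of_discrete, gnp_real_allEdgesPresent hp₀ hp₁,
    card_copyEdges]

lemma integral_copyCount_sq (hp₀ : 0 ≤ p) (hp₁ : p ≤ 1) :
    ∫ ω, copyCount H ω ^ 2 ∂gnp n p =
      ∑ f : V ↪ Fin n, ∑ g : V ↪ Fin n, p ^ #(copyEdges H f ∪ copyEdges H g) := by
  have hsq : ∀ ω, copyCount H ω ^ 2 = ∑ f : V ↪ Fin n, ∑ g : V ↪ Fin n,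
      (allEdgesPresent (copyEdges H f ∪ copyEdges H g)).indicator 1 ω := by
    intro ω
    simp_rw [copyCount, sq, sum_mul_sum, allEdgesPresent_union, Set.inter_indicator_one,
      Pi.mul_apply]
  simp_rw [hsq]
  rw [integral_finsetSum _ fun _ _ => .of_finite]
  refine sum_congr rfl fun f _ => ?_
  rw [integral_finsetSum _ fun _ _ => .of_finite]
  simp [integral_indicator_one MeasurableSet.of_discrete, gnp_real_allEdgesPresent hp₀ hp₁]

lemma variance_copyCount (hp₀ : 0 ≤ p) (hp₁ : p ≤ 1) :
    ProbabilityTheory.variance (copyCount H) (gnp n p) =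
      ∑ f : V ↪ Fin n, ∑ g : V ↪ Fin n,
        (p ^ #(copyEdges H f ∪ copyEdges H g) - p ^ #H.edgeFinset * p ^ #H.edgeFinset) := by
  rw [ProbabilityTheory.variance_eq_sub MemLp.of_discrete]
  simp only [Pi.pow_apply]
  rw [integral_copyCount_sq H hp₀ hp₁, integral_copyCount H hp₀ hp₁]
  simp only [sum_sub_distrib, sum_const, card_univ, nsmul_eq_mul]
  ring

def overlap (f g : V ↪ Fin n) : Finset V := {x | ∃ y, g y = f x}

lemma card_copyEdges_inter_le [DecidableEq V] (f g : V ↪ Fin n) :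
    #(copyEdges H f ∩ copyEdges H g) ≤
      #(H.edgeFinset.filter fun e => ∀ x ∈ e, x ∈ overlap f g) := by
  refine (card_le_card fun s hs => ?_).trans (card_map f.sym2Map).le
  obtain ⟨hsf, hsg⟩ := mem_inter.1 hs
  obtain ⟨e, he, rfl⟩ := mem_map.1 hsf
  obtain ⟨e', -, he'⟩ := mem_map.1 hsg
  refine mem_map_of_mem _ (mem_filter.2 ⟨he, fun x hx => ?_⟩)
  have hfx : f x ∈ g.sym2Map e' := he' ▸ Sym2.mem_map.2 ⟨x, hx, rfl⟩
  obtain ⟨y, -, hy⟩ := Sym2.mem_map.1 hfx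
  simpa [overlap] using ⟨y, hy⟩

lemma pow_card_copyEdges_union_le [DecidableEq V] (hp₀ : 0 < p) (hp₁ : p ≤ 1) (f g : V ↪ Fin n) :
    p ^ #(copyEdges H f ∪ copyEdges H g) ≤
      p ^ #H.edgeFinset * p ^ #H.edgeFinset / (p ^ m0 H) ^ #(overlap f g) := by
  have hcard := card_union_add_card_inter (copyEdges H f) (copyEdges H g)
  rw [card_copyEdges, card_copyEdges] at hcard
  have hinter : (p ^ m0 H) ^ #(overlap f g) ≤ p ^ #(copyEdges H f ∩ copyEdges H g) := by
    rw [← Real.rpow_mul_natCast hp₀.le, ← Real.rpow_natCast]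
    refine Real.rpow_le_rpow_of_exponent_ge hp₀ hp₁ ?_
    exact (Nat.cast_le.2 (card_copyEdges_inter_le H f g)).trans (card_edges_within_le H _)
  rw [le_div_iff₀ (by positivity), ← pow_add, ← hcard, pow_add]
  gcongr

lemma card_overlap_eq_le [DecidableEq V] [Nonempty V] (B : Finset V) :
    #{q : (V ↪ Fin n) × (V ↪ Fin n) | overlap q.1 q.2 = B} ≤
      Fintype.card (V ↪ Fin n) * Fintype.card V ^ #B * n ^ (Fintype.card V - #B) := by
  -- `f` is recovered from `g`, from `g⁻¹ ∘ f` on `B` and from `f` off `B`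
  let encode (q : (V ↪ Fin n) × (V ↪ Fin n)) : (V ↪ Fin n) × (B → V) × ((Bᶜ : Finset V) → Fin n) :=
    (q.2, fun x => Function.invFun q.2 (q.1 x), fun x => q.1 x)
  have hinj : Set.InjOn encode {q | overlap q.1 q.2 = B} := by
    rintro ⟨f₁, g⟩ h₁ ⟨f₂, g₂⟩ h₂ heq
    simp only [encode, Prod.mk.injEq] at heq
    obtain ⟨rfl, hB, hBc⟩ := heq
    refine Prod.ext (DFunLike.ext _ _ fun x => ?_) rfl
    by_cases hx : x ∈ B
    · have hx₁ : ∃ y, g y = f₁ x := by simpa [← h₁.out, overlap] using hx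
      have hx₂ : ∃ y, g y = f₂ x := by simpa [← h₂.out, overlap] using hx
      rw [← Function.invFun_eq hx₁, ← Function.invFun_eq hx₂]
      exact congrArg g (congrFun hB ⟨x, hx⟩)
    · exact congrFun hBc ⟨x, mem_compl.2 hx⟩
  refine (card_le_card_of_injOn encode (fun _ _ => mem_univ _) (by simpa using hinj)).trans_eq ?_
  simp [Fintype.card_prod, mul_assoc]

lemma variance_copyCount_le [DecidableEq V] [Nonempty V] (hp₀ : 0 < p) (hp₁ : p ≤ 1)
    (hn : 2 * Fintype.card V ≤ n) (hnp : 1 ≤ n * p ^ m0 H) :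
    ProbabilityTheory.variance (copyCount H) (gnp n p) ≤
      4 ^ Fintype.card V * Fintype.card V ^ Fintype.card V / (n * p ^ m0 H) *
        (∫ ω, copyCount H ω ∂gnp n p) ^ 2 := by
  set v := Fintype.card V
  set N : ℝ := (Fintype.card (V ↪ Fin n) : ℝ)
  set x := p ^ m0 H
  set q := p ^ #H.edgeFinset * p ^ #H.edgeFinset
  have hx : 0 < x := Real.rpow_pos_of_pos hp₀ _
  have hq : 0 ≤ q := by positivity
  have hN : (n : ℝ) ^ v ≤ 2 ^ v * N := by
    simp only [N, Fintype.card_embedding_eq, Fintype.card_fin]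
    exact_mod_cast Nat.pow_le_two_pow_mul_descFactorial hn
  have hfiber (B : Finset V) :
      (#{r : (V ↪ Fin n) × (V ↪ Fin n) | overlap r.1 r.2 = B} : ℝ) ≤
        N * v ^ #B * n ^ (v - #B) := by
    simp only [N]
    exact_mod_cast card_overlap_eq_le B
  have hw (B : Finset V) : 0 ≤ (x ^ #B)⁻¹ - 1 :=
    sub_nonneg.2 (one_le_inv₀ (by positivity) |>.2
      (pow_le_one₀ hx.le (Real.rpow_le_one hp₀.le hp₁ (m0_nonneg H))))
  have hweight (B : Finset V) : (v : ℝ) ^ #B * n ^ (v - #B) * ((x ^ #B)⁻¹ - 1) ≤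
      v ^ v * (n ^ v / (n * x)) := by
    rw [mul_assoc]
    have hv : (1 : ℝ) ≤ v := by exact_mod_cast Fintype.card_pos
    calc (v : ℝ) ^ #B * (n ^ (v - #B) * ((x ^ #B)⁻¹ - 1)) ≤ v ^ #B * (n ^ v / (n * x)) := by
          gcongr; exact pow_sub_mul_inv_pow_sub_one_le hx hnp (card_le_univ B)
      _ ≤ v ^ v * (n ^ v / (n * x)) := by
          gcongr
          exact card_le_univ B
  calc ProbabilityTheory.variance (copyCount H) (gnp n p)
      ≤ ∑ r : (V ↪ Fin n) × (V ↪ Fin n), q * ((x ^ #(overlap r.1 r.2))⁻¹ - 1) := by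
        rw [variance_copyCount H hp₀.le hp₁, ← Fintype.sum_prod_type']
        refine sum_le_sum fun r _ => ?_
        have := pow_card_copyEdges_union_le H hp₀ hp₁ r.1 r.2
        rw [mul_sub, mul_one, ← div_eq_mul_inv]
        linarith
    _ = ∑ B : Finset V, #{r : (V ↪ Fin n) × (V ↪ Fin n) | overlap r.1 r.2 = B} *
          (q * ((x ^ #B)⁻¹ - 1)) := by
        rw [← sum_fiberwise univ (fun r => overlap r.1 r.2)]
        refine sum_congr rfl fun B _ => ?_
        rw [sum_congr rfl fun r hr => by rw [(mem_filter.1 hr).2], sum_const, nsmul_eq_mul]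
    _ ≤ ∑ B : Finset V, N * q * (v ^ v * (n ^ v / (n * x))) := by
        refine sum_le_sum fun B _ => ?_
        calc (#{r : (V ↪ Fin n) × (V ↪ Fin n) | overlap r.1 r.2 = B} : ℝ) * (q * ((x ^ #B)⁻¹ - 1))
            ≤ N * v ^ #B * n ^ (v - #B) * (q * ((x ^ #B)⁻¹ - 1)) := by
              gcongr
              · exact mul_nonneg hq (hw B)
              · exact hfiber B
          _ = N * q * (v ^ #B * n ^ (v - #B) * ((x ^ #B)⁻¹ - 1)) := by ring
          _ ≤ N * q * (v ^ v * (n ^ v / (n * x))) :=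
              mul_le_mul_of_nonneg_left (hweight B) (by positivity)
    _ = 2 ^ v * N * q * v ^ v * n ^ v / (n * x) := by
        rw [sum_const, card_univ, Fintype.card_finset, nsmul_eq_mul]
        push_cast
        ring
    _ ≤ 2 ^ v * N * q * v ^ v * (2 ^ v * N) / (n * x) := by gcongr
    _ = _ := by
        rw [integral_copyCount H hp₀.le hp₁, show (4 : ℝ) ^ v = 2 ^ v * 2 ^ v by
          rw [← mul_pow]; norm_num]
        ring

end SecondMoment

section OneStatement

variable {V : Type*} [Fintype V] {H : SimpleGraph V} [DecidableRel H.Adj]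

lemma copyCount_eq_zero {n : ℕ} {ω : Sym2 (Fin n) → Bool} (h : ¬ ContainsCopy H (graphOf ω)) :
    copyCount H ω = 0 :=
  Finset.sum_eq_zero fun f _ =>
    Set.indicator_of_notMem (fun hf => h ((containsCopy_graphOf_iff H ω).2 ⟨f, hf⟩)) _

lemma gnp_not_containsCopy_le [DecidableEq V] [Nonempty V] {n : ℕ} {p : ℝ} (hp₀ : 0 < p)
    (hp₁ : p ≤ 1) (hn : 2 * Fintype.card V ≤ n) (hnp : 1 ≤ n * p ^ m0 H) :
    gnp n p {ω | ¬ ContainsCopy H (graphOf ω)} ≤ ENNReal.ofReal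
      (4 ^ Fintype.card V * Fintype.card V ^ Fintype.card V / (n * p ^ m0 H)) := by
  have hmean : 0 < ∫ ω, copyCount H ω ∂gnp n p := by
    rw [integral_copyCount H hp₀.le hp₁, Fintype.card_embedding_eq, Fintype.card_fin]
    have : 0 < n.descFactorial (Fintype.card V) := Nat.pos_of_ne_zero
      (Nat.descFactorial_eq_zero_iff_lt.not.2 (by omega))
    positivity
  calc gnp n p {ω | ¬ ContainsCopy H (graphOf ω)}
      ≤ gnp n p {ω | copyCount H ω ≤ 0} := measure_mono fun ω hω => (copyCount_eq_zero hω).le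
    _ ≤ _ := measure_nonpos_le_variance_div_sq MemLp.of_discrete hmean
    _ ≤ _ := by
        refine ENNReal.ofReal_le_ofReal ?_
        rw [div_le_iff₀ (by positivity)]
        exact variance_copyCount_le H hp₀ hp₁ hn hnp

theorem tendsto_gnp_containsCopy_one [DecidableEq V] (hH : H.edgeSet.Nonempty) {p : ℕ → ℝ}
    (hp : ∀ n, 0 ≤ p n ∧ p n ≤ 1)
    (h : Tendsto (fun n : ℕ => p n * (n : ℝ) ^ (1 / m0 H)) atTop atTop) :
    Tendsto (fun n : ℕ => gnp n (p n) {ω | ContainsCopy H (graphOf ω)}) atTop (𝓝 1) := by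
  have : Nonempty V := ⟨hH.some.out.1⟩
  have hm := m0_pos H hH
  set C : ℝ := 4 ^ Fintype.card V * Fintype.card V ^ Fintype.card V
  have hnp : Tendsto (fun n : ℕ => n * p n ^ m0 H) atTop atTop := by
    refine ((tendsto_rpow_atTop hm).comp h).congr fun n => ?_
    simp only [Function.comp_apply]
    rw [Real.mul_rpow (hp n).1 (by positivity), ← Real.rpow_mul (Nat.cast_nonneg n),
      one_div_mul_cancel hm.ne', Real.rpow_one, mul_comm]
  have hbound : ∀ᶠ n : ℕ in atTop, gnp n (p n) {ω | ¬ ContainsCopy H (graphOf ω)} ≤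
      ENNReal.ofReal (C / (n * p n ^ m0 H)) := by
    filter_upwards [eventually_ge_atTop (2 * Fintype.card V), hnp.eventually_ge_atTop 1]
      with n hn hn1
    have hp₀ : 0 < p n := (hp n).1.lt_of_ne fun h0 => by
      rw [← h0, Real.zero_rpow hm.ne', mul_zero] at hn1
      linarith
    exact gnp_not_containsCopy_le hp₀ (hp n).2 hn hn1
  have hlim := ENNReal.tendsto_ofReal ((tendsto_const_nhds (x := C)).div_atTop hnp)
  rw [ENNReal.ofReal_zero] at hlim
  have hnot := tendsto_of_tendsto_of_tendsto_of_le_of_le' tendsto_const_nhds hlim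
    (Eventually.of_forall fun _ => zero_le) hbound
  rw [← ENNReal.tendsto_const_sub_nhds_zero_iff ENNReal.one_ne_top fun _ => prob_le_one]
  refine hnot.congr fun n => ?_
  rw [← prob_compl_eq_one_sub MeasurableSet.of_discrete]
  rfl

end OneStatement

/-- **Threshold for the appearance of a fixed graph `H`** (Bollobás).
For a fixed graph `H` with at least one edge, `n^{-1/m₀(H)}` is a threshold for containing a
copy of `H`: if `p · n^{1/m₀(H)} → 0` then a.a.s. `G(n,p)` contains no copy of `H`, and if
`p · n^{1/m₀(H)} → ∞` then a.a.s. `G(n,p)` contains a copy of `H`. -/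
theorem stmt_0 {V : Type} [Fintype V] (H : SimpleGraph V) (hH : H.edgeSet.Nonempty)
    (p : ℕ → ℝ) (hp : ∀ n, 0 ≤ p n ∧ p n ≤ 1) :
    (Tendsto (fun n : ℕ => p n * (n : ℝ) ^ (1 / m0 H)) atTop (𝓝 0) →
      Tendsto (fun n : ℕ => gnp n (p n) {ω | ContainsCopy H (graphOf ω)}) atTop (𝓝 0)) ∧
    (Tendsto (fun n : ℕ => p n * (n : ℝ) ^ (1 / m0 H)) atTop atTop →
      Tendsto (fun n : ℕ => gnp n (p n) {ω | ContainsCopy H (graphOf ω)}) atTop (𝓝 1)) := by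
  classical
  exact ⟨tendsto_gnp_containsCopy_zero hH hp, tendsto_gnp_containsCopy_one hH hp⟩
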